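/- arXiv:2010.03054 — 2 statements merged into one kernel-verified Lean document; each statement's English description precedes it below -/
import Mathlib

section
/- Let S be a G-graded ring. Then S is strongly graded if and only if S is symmetrically graded and for every g ∈ G the only symmetrically graded left S-module M with M_g = 0 is the zero module. -/
open Pointwise

section Defs

variable {G : Type} [AddGroup G] [DecidableEq G]
variable {A : Type} [Ring A]
variable {M : Type} [AddCommGroup M] [Module A M]

/-- The additive subgroup of `M` consisting of finite sums of products `a • m`
with `a ∈ S` and `m ∈ N`. -/
def prodSMul (S : AddSubgroup A) (N : AddSubgroup M) : AddSubgroup M where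
  __ := S.toAddSubmonoid • N.toAddSubmonoid
  neg_mem' {x} hx := by
    refine AddSubmonoid.smul_induction_on hx (fun a ha m hm => ?_) (fun x y hx hy => ?_)
    · rw [show -(a • m) = (-a) • m by rw [neg_smul]]
      exact AddSubmonoid.smul_mem_smul (S.neg_mem ha) hm
    · rw [neg_add]
      exact (S.toAddSubmonoid • N.toAddSubmonoid).add_mem hx hy

/-- A (possibly non-unital) ring, here an additive subgroup of `A` closed under
multiplication, is *s-unital* if every element has a left and a right local unit in it. -/
def IsSUnitalSub (I : AddSubgroup A) : Prop :=
  ∀ a ∈ I, ∃ u ∈ I, ∃ v ∈ I, u * a = a ∧ a * v = a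

variable (𝒜 : G → AddSubgroup A)

/-- `S` is symmetrically graded if `S_g S_{g⁻¹} S_g = S_g` for all `g`. -/
def IsSymmetricallyGraded : Prop := ∀ g : G, 𝒜 g * 𝒜 (-g) * 𝒜 g = 𝒜 g

/-- `S` is nearly epsilon-strongly graded if each `S_g` is an s-unital
`(S_g S_{g⁻¹}, S_{g⁻¹} S_g)`-bimodule: for every `s ∈ S_g` there are
`u ∈ S_g S_{g⁻¹}` and `v ∈ S_{g⁻¹} S_g` with `u s = s = s v`. -/
def IsNearlyEpsilonStrong : Prop :=
  ∀ g : G, ∀ s ∈ 𝒜 g, ∃ u ∈ 𝒜 g * 𝒜 (-g), ∃ v ∈ 𝒜 (-g) * 𝒜 g, u * s = s ∧ s * v = s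

end Defs

/-!
If `S` is strongly graded, then `S_k S_{-k} = S_0 = S_{k-g} S_{g-k}`, so in a symmetrically graded
module `M_k = S_{k-g} S_{g-k} M_k ⊆ S_{k-g} M_g`, which vanishes with `M_g`.

Conversely, fix `g` and let `J = S S_{-g} S_g`, a left ideal generated in degree `0`, hence
homogeneous. The graded module `S / J` is symmetrically graded, being a quotient of `S`, and its
degree `g` part vanishes because `S_g = S_g S_{-g} S_g ⊆ J`. So `S / J = 0`, i.e. `1 ∈ J`, and
taking degree `0` components gives `1 ∈ S_0 S_{-g} S_g ⊆ S_{-g} S_g`. This for every `g` is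
Dade's criterion for a strong grading: `S_{g+h} = S_g S_{-g} S_{g+h} ⊆ S_g S_h`.
-/

open DirectSum

namespace AddSubgroup

section NonUnitalNonAssocRing

variable {R : Type*} [NonUnitalNonAssocRing R] {S T U : AddSubgroup R}

theorem mul_mem_mul {s t : R} (hs : s ∈ S) (ht : t ∈ T) : s * t ∈ S * T :=
  AddSubmonoid.mul_mem_mul hs ht

theorem mul_le : S * T ≤ U ↔ ∀ s ∈ S, ∀ t ∈ T, s * t ∈ U :=
  AddSubmonoid.mul_le

@[elab_as_elim]
protected theorem mul_induction_on {C : R → Prop} {r : R} (hr : r ∈ S * T)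
    (mul : ∀ s ∈ S, ∀ t ∈ T, C (s * t)) (add : ∀ x y, C x → C y → C (x + y)) : C r :=
  AddSubmonoid.mul_induction_on hr mul add

theorem mul_le_mul_left (h : S ≤ T) : S * U ≤ T * U :=
  AddSubmonoid.mul_le_mul_left h

theorem mul_le_mul_right (h : T ≤ U) : S * T ≤ S * U :=
  AddSubmonoid.mul_le_mul_right h

end NonUnitalNonAssocRing

protected theorem mul_assoc {R : Type*} [NonUnitalRing R] (S T U : AddSubgroup R) :
    S * T * U = S * (T * U) :=
  toAddSubmonoid_injective (mul_assoc S.toAddSubmonoid T.toAddSubmonoid U.toAddSubmonoid)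

theorem mul_le_toAddSubgroup_span {R : Type*} [Ring R] (S T : AddSubgroup R) :
    S * T ≤ (Ideal.span (T : Set R)).toAddSubgroup :=
  mul_le.2 fun _ _ _ ht => Ideal.mul_mem_left _ _ (Ideal.subset_span ht)

end AddSubgroup

theorem SetLike.mul_le_graded {ι A : Type*} [Add ι] [Ring A] (𝒜 : ι → AddSubgroup A)
    [SetLike.GradedMul 𝒜] (i j : ι) : 𝒜 i * 𝒜 j ≤ 𝒜 (i + j) :=
  AddSubgroup.mul_le.2 fun _ hs _ ht => SetLike.mul_mem_graded hs ht

theorem SetLike.neg_mul_le_graded_zero {G A : Type*} [AddGroup G] [Ring A]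
    (𝒜 : G → AddSubgroup A) [SetLike.GradedMul 𝒜] (g : G) : 𝒜 (-g) * 𝒜 g ≤ 𝒜 0 := by
  simpa using SetLike.mul_le_graded 𝒜 (-g) g

section ProdSMul

variable {A M N : Type} [Ring A] [AddCommGroup M] [Module A M] [AddCommGroup N] [Module A N]

theorem prodSMul_le {S : AddSubgroup A} {P Q : AddSubgroup M} :
    prodSMul S P ≤ Q ↔ ∀ a ∈ S, ∀ m ∈ P, a • m ∈ Q :=
  AddSubmonoid.smul_le

theorem smul_mem_prodSMul {S : AddSubgroup A} {P : AddSubgroup M} {a : A} {m : M} (ha : a ∈ S)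
    (hm : m ∈ P) : a • m ∈ prodSMul S P :=
  AddSubmonoid.smul_mem_smul ha hm

theorem map_prodSMul_le (f : M →ₗ[A] N) (S : AddSubgroup A) (P : AddSubgroup M) :
    (prodSMul S P).map f.toAddMonoidHom ≤ prodSMul S (P.map f.toAddMonoidHom) :=
  AddSubgroup.map_le_iff_le_comap.2 <| prodSMul_le.2 fun a ha m hm => by
    simpa using smul_mem_prodSMul ha (AddSubgroup.mem_map_of_mem f.toAddMonoidHom hm)

theorem prodSMul_le_graded {ιA ιM : Type*} [VAdd ιA ιM] (𝒜 : ιA → AddSubgroup A)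
    (ℳ : ιM → AddSubgroup M) [SetLike.GradedSMul 𝒜 ℳ] {S : AddSubgroup A} {i : ιA}
    (hS : S ≤ 𝒜 i) (j : ιM) : prodSMul S (ℳ j) ≤ ℳ (i +ᵥ j) :=
  prodSMul_le.2 fun _ ha _ hm => SetLike.GradedSMul.smul_mem (hS ha) hm

end ProdSMul

namespace Submodule

variable {ι A M : Type*} [Ring A] [AddCommGroup M] [Module A M]
  (p : Submodule A M) (ℳ : ι → AddSubgroup M)

def quotientGrading (i : ι) : AddSubgroup (M ⧸ p) :=
  (ℳ i).map p.mkQ.toAddMonoidHom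

theorem quotientGrading_eq_bot_iff (i : ι) :
    p.quotientGrading ℳ i = ⊥ ↔ ℳ i ≤ p.toAddSubgroup := by
  rw [quotientGrading, AddSubgroup.map_eq_bot_iff]
  exact forall_congr' fun m => imp_congr_right fun _ => Submodule.Quotient.mk_eq_zero p

instance {ιA : Type*} [VAdd ιA ι] (𝒜 : ιA → AddSubgroup A) [SetLike.GradedSMul 𝒜 ℳ] :
    SetLike.GradedSMul 𝒜 (p.quotientGrading ℳ) where
  smul_mem := by
    rintro i j a - ha ⟨m, hm, rfl⟩
    exact ⟨a • m, SetLike.GradedSMul.smul_mem ha hm, p.mkQ.map_smul a m⟩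

variable {p ℳ} [DecidableEq ι] [Decomposition ℳ]

theorem IsHomogeneous.isInternal_quotientGrading (hp : p.IsHomogeneous ℳ) :
    IsInternal (p.quotientGrading ℳ) := by
  let f := DirectSum.map fun i => p.mkQ.toAddMonoidHom.addSubgroupMap (ℳ i)
  have hf : (DirectSum.coeAddMonoidHom (p.quotientGrading ℳ)).comp f =
      p.mkQ.toAddMonoidHom.comp (DirectSum.coeAddMonoidHom ℳ) :=
    DirectSum.addHom_ext fun _ _ => rfl
  refine ⟨(injective_iff_map_eq_zero _).2 fun z hz => ?_, fun x => ?_⟩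
  · obtain ⟨y, rfl⟩ := (DirectSum.map_surjective _).2
      (fun i => p.mkQ.toAddMonoidHom.addSubgroupMap_surjective (ℳ i)) z
    have hy : DirectSum.coeAddMonoidHom ℳ y ∈ p :=
      (Submodule.Quotient.mk_eq_zero p).1 ((DFunLike.congr_fun hf y).symm.trans hz)
    ext i
    have hyi : ((decompose ℳ ((decompose ℳ).symm y)) i : M) ∈ p := hp i hy
    rw [Equiv.apply_symm_apply] at hyi
    exact (Submodule.Quotient.mk_eq_zero p).2 hyi
  · obtain ⟨m, rfl⟩ := p.mkQ_surjective x
    exact ⟨f (decompose ℳ m),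
      (DFunLike.congr_fun hf _).trans (congrArg p.mkQ ((decompose ℳ).symm_apply_apply m))⟩

noncomputable abbrev IsHomogeneous.quotientDecomposition (hp : p.IsHomogeneous ℳ) :
    Decomposition (p.quotientGrading ℳ) :=
  hp.isInternal_quotientGrading.chooseDecomposition

end Submodule

section Grading

variable {G A : Type} [AddGroup G] [Ring A] (𝒜 : G → AddSubgroup A)

def IsStronglyGraded : Prop := ∀ g h : G, 𝒜 g * 𝒜 h = 𝒜 (g + h)

def IsSymmetricallyGradedModule {M : Type} [AddCommGroup M] [Module A M]
    (ℳ : G → AddSubgroup M) : Prop :=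
  ∀ k : G, ℳ k = prodSMul (𝒜 k * 𝒜 (-k)) (ℳ k)

variable {𝒜}

theorem IsStronglyGraded.isSymmetricallyGraded [DecidableEq G] (h𝒜 : IsStronglyGraded 𝒜) :
    IsSymmetricallyGraded 𝒜 := fun g => by
  rw [h𝒜, add_neg_cancel, h𝒜, zero_add]

theorem isStronglyGraded_of_one_mem_neg_mul [SetLike.GradedMul 𝒜]
    (h : ∀ g, (1 : A) ∈ 𝒜 (-g) * 𝒜 g) : IsStronglyGraded 𝒜 := fun g k => by
  refine le_antisymm (SetLike.mul_le_graded 𝒜 g k) fun x hx => ?_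
  have hx' : 1 * x ∈ 𝒜 g * 𝒜 (-g) * 𝒜 (g + k) :=
    AddSubgroup.mul_mem_mul (by simpa using h (-g)) hx
  rw [one_mul, AddSubgroup.mul_assoc] at hx'
  refine AddSubgroup.mul_le_mul_right ?_ hx'
  simpa using SetLike.mul_le_graded 𝒜 (-g) (g + k)

theorem prodSMul_mul_eq_bot {M : Type} [AddCommGroup M] [Module A M] (ℳ : G → AddSubgroup M)
    [SetLike.GradedSMul 𝒜 ℳ] (S : AddSubgroup A) {j k : G} (h : ℳ (j + k) = ⊥) :
    prodSMul (S * 𝒜 j) (ℳ k) = ⊥ := by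
  refine eq_bot_iff.2 <| prodSMul_le.2 fun a ha m hm =>
    AddSubgroup.mul_induction_on (C := fun a => a • m ∈ (⊥ : AddSubgroup M)) ha ?_ ?_
  · intro s _ t ht
    have htm : t • m ∈ ℳ (j + k) := SetLike.GradedSMul.smul_mem ht hm
    rw [h, AddSubgroup.mem_bot] at htm
    rw [mul_smul, htm, smul_zero]
    exact zero_mem _
  · intro x y hx hy
    rw [add_smul]
    exact add_mem hx hy

theorem IsStronglyGraded.eq_bot_of_isSymmetricallyGradedModule {M : Type} [AddCommGroup M]
    [Module A M] {ℳ : G → AddSubgroup M} [SetLike.GradedSMul 𝒜 ℳ] (h𝒜 : IsStronglyGraded 𝒜)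
    (hℳ : IsSymmetricallyGradedModule 𝒜 ℳ) {g : G} (hg : ℳ g = ⊥) (k : G) : ℳ k = ⊥ := by
  have h0 : 𝒜 k * 𝒜 (-k) = 𝒜 (-(g - k)) * 𝒜 (g - k) := by
    rw [h𝒜, h𝒜, add_neg_cancel, neg_add_cancel]
  rw [hℳ k, h0]
  exact prodSMul_mul_eq_bot ℳ _ (by rwa [sub_add_cancel])

theorem IsSymmetricallyGraded.isSymmetricallyGradedModule_self [DecidableEq G]
    (h : IsSymmetricallyGraded 𝒜) : IsSymmetricallyGradedModule 𝒜 𝒜 :=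
  -- `prodSMul S T` and `S * T` agree definitionally for `S T : AddSubgroup A`
  fun k => (h k).symm

theorem IsSymmetricallyGradedModule.quotient [SetLike.GradedMul 𝒜] {M : Type} [AddCommGroup M]
    [Module A M] {ℳ : G → AddSubgroup M} [SetLike.GradedSMul 𝒜 ℳ]
    (hℳ : IsSymmetricallyGradedModule 𝒜 ℳ) (p : Submodule A M) :
    IsSymmetricallyGradedModule 𝒜 (p.quotientGrading ℳ) := fun k => by
  refine le_antisymm ?_ ?_
  · exact (congrArg (AddSubgroup.map _) (hℳ k)).le.trans (map_prodSMul_le p.mkQ _ _)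
  · refine (prodSMul_le_graded 𝒜 _ (SetLike.mul_le_graded 𝒜 k (-k)) k).trans_eq ?_
    rw [add_neg_cancel, vadd_eq_add, zero_add]

end Grading

section Span

variable {ι A : Type*} [AddMonoid ι] [DecidableEq ι] [Ring A] (𝒜 : ι → AddSubgroup A)
  [GradedRing 𝒜]

theorem coe_decompose_mem_mul_of_mem_span {T : AddSubgroup A} (hT : T ≤ 𝒜 0) {x : A}
    (hx : x ∈ Ideal.span (T : Set A)) (i : ι) : (decompose 𝒜 x i : A) ∈ 𝒜 i * T := by
  induction hx using Submodule.closure_induction with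
  | zero => simp
  | add x y _ _ hx hy => simpa using add_mem hx hy
  | smul_mem r t ht =>
    rw [smul_eq_mul, coe_decompose_mul_of_right_mem_zero 𝒜 (hT ht)]
    exact AddSubgroup.mul_mem_mul (SetLike.coe_mem _) ht

end Span

section OneMem

variable {G A : Type} [AddGroup G] [DecidableEq G] [Ring A] (𝒜 : G → AddSubgroup A)
  [GradedRing 𝒜]

theorem one_mem_neg_mul_of_one_mem_span {g : G}
    (h : 1 ∈ Ideal.span ((𝒜 (-g) * 𝒜 g : AddSubgroup A) : Set A)) : (1 : A) ∈ 𝒜 (-g) * 𝒜 g := by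
  have h1 := coe_decompose_mem_mul_of_mem_span 𝒜 (SetLike.neg_mul_le_graded_zero 𝒜 g) h 0
  rw [decompose_of_mem_same 𝒜 (SetLike.one_mem_graded 𝒜), ← AddSubgroup.mul_assoc] at h1
  refine AddSubgroup.mul_le_mul_left ?_ h1
  simpa using SetLike.mul_le_graded 𝒜 0 (-g)

end OneMem

/-- `S` is strongly graded iff `S` is symmetrically graded and for
every `g` the only symmetrically graded left `S`-module `M` with `M_g = 0` is the
zero module. -/
theorem stronglyGraded_iff_symmetricallyGraded_and_no_torsion
    {G : Type} [AddGroup G] [DecidableEq G]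
    {A : Type} [Ring A] (𝒜 : G → AddSubgroup A) [GradedRing 𝒜] :
    (∀ g h : G, 𝒜 g * 𝒜 h = 𝒜 (g + h)) ↔
      (IsSymmetricallyGraded 𝒜 ∧
        ∀ g : G, ∀ (M : Type) [AddCommGroup M] [Module A M]
          (ℳ : G → AddSubgroup M) [SetLike.GradedSMul 𝒜 ℳ] [DirectSum.Decomposition ℳ],
          (∀ k : G, ℳ k = prodSMul (𝒜 k * 𝒜 (-k)) (ℳ k)) →
          ℳ g = ⊥ → ∀ k : G, ℳ k = ⊥) := by
  refine ⟨fun h𝒜 => ⟨IsStronglyGraded.isSymmetricallyGraded h𝒜, fun g M _ _ ℳ _ _ hℳ hg =>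
    IsStronglyGraded.eq_bot_of_isSymmetricallyGradedModule h𝒜 hℳ hg⟩, ?_⟩
  rintro ⟨hsymm, hmod⟩
  refine isStronglyGraded_of_one_mem_neg_mul fun g => ?_
  let J := Ideal.span ((𝒜 (-g) * 𝒜 g : AddSubgroup A) : Set A)
  have hJ : J.IsHomogeneous 𝒜 :=
    Ideal.homogeneous_span 𝒜 _ fun _ hx => ⟨0, SetLike.neg_mul_le_graded_zero 𝒜 g hx⟩
  let := hJ.quotientDecomposition
  have hg : J.quotientGrading 𝒜 g = ⊥ := (J.quotientGrading_eq_bot_iff 𝒜 g).2 <| by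
    rw [← hsymm g, AddSubgroup.mul_assoc]
    exact AddSubgroup.mul_le_toAddSubgroup_span _ _
  have h0 := hmod g (A ⧸ J) (J.quotientGrading 𝒜)
    (hsymm.isSymmetricallyGradedModule_self.quotient J) hg 0
  exact one_mem_neg_mul_of_one_mem_span 𝒜
    ((J.quotientGrading_eq_bot_iff 𝒜 0).1 h0 (SetLike.one_mem_graded 𝒜))
end

section
/- Let S be a nearly epsilon-strongly G-graded ring such that each S_g S_{g⁻¹} is s-unital, and let M be a graded left S-module. Then the multiplication map τ_M: S ⊗_R M_e → ⊕_{g∈G} (S_g S_{g⁻¹}) M_g, s ⊗ m ↦ sm, is an isomorphism of graded S-modules, where R = S_e and (S ⊗_R M_e)_g = S_g ⊗_R M_e. -/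
/-!
The map is `s ⊗ m ↦ s • m`. A homogeneous `s ∈ S_g` has a left unit `u ∈ S_g S_{g⁻¹}`, so
`s • m = u • (s • m)` lies in `(S_g S_{g⁻¹}) M_g`; conversely `(a b) • n = a • (b • n)` is the image
of `a ⊗ b • n`, since `b • n ∈ M_e`. For injectivity, split a kernel element by the degrees of its
left factors: as `M` is graded, each degree-`g` part `∑ sᵢ ⊗ mᵢ` is again in the kernel. Finitely
many `sᵢ ∈ S_g` have a common left unit `u = ∑ aⱼ bⱼ ∈ S_g S_{g⁻¹}`, and since `bⱼ sᵢ ∈ R`,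
`∑ sᵢ ⊗ mᵢ = ∑ⱼ aⱼ ⊗ bⱼ • ∑ᵢ sᵢ • mᵢ = 0` in `S ⊗_R M_e`.
-/

open Pointwise

section Defs

variable {G : Type} [AddGroup G] [DecidableEq G]
variable {A : Type} [Ring A]
variable {M : Type} [AddCommGroup M] [Module A M]

variable (𝒜 : G → AddSubgroup A)

section Stmt19

open scoped TensorProduct

variable {G : Type} [AddGroup G] [DecidableEq G]
variable {A : Type} [Ring A] (𝒜 : G → AddSubgroup A) [GradedRing 𝒜]
variable {M : Type} [AddCommGroup M] [Module A M]
variable (ℳ : G → AddSubgroup M) [SetLike.GradedSMul 𝒜 ℳ] [DirectSum.Decomposition ℳ]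

/-- The submodule of balanced relations defining `S ⊗_R M_e` over `R = S_e`
as a quotient of `S ⊗_ℤ M_e`. -/
def balancedRelFull : Submodule ℤ (A ⊗[ℤ] ↥(ℳ 0)) :=
  Submodule.span ℤ
    { x | ∃ (s : A) (r : ↥(𝒜 0)) (m : ↥(ℳ 0)),
        x = (s * r.1) ⊗ₜ[ℤ] m
          - s ⊗ₜ[ℤ] (⟨r.1 • m.1, by
              have := SetLike.GradedSMul.smul_mem r.2 m.2; rwa [zero_vadd] at this⟩ :
            ↥(ℳ 0)) }

/-- The tensor product `S ⊗_R M_e` over `R = S_e`, realized as a quotient of the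
tensor product over `ℤ` by the balanced relations. -/
def tensorFull := (A ⊗[ℤ] ↥(ℳ 0)) ⧸ balancedRelFull 𝒜 ℳ

noncomputable instance : AddCommGroup (tensorFull 𝒜 ℳ) :=
  inferInstanceAs (AddCommGroup ((A ⊗[ℤ] ↥(ℳ 0)) ⧸ balancedRelFull 𝒜 ℳ))

noncomputable instance : Module ℤ (tensorFull 𝒜 ℳ) :=
  inferInstanceAs (Module ℤ ((A ⊗[ℤ] ↥(ℳ 0)) ⧸ balancedRelFull 𝒜 ℳ))

theorem exists_left_unit_of_finset {R : Type*} [NonUnitalRing R] {I J : AddSubgroup R}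
    (hI : ∀ x ∈ I, ∀ y ∈ I, x * y ∈ I) (hIJ : ∀ x ∈ I, ∀ y ∈ J, x * y ∈ J)
    (hJ : ∀ y ∈ J, ∃ u ∈ I, u * y = y) (F : Finset R) (hF : ∀ y ∈ F, y ∈ J) :
    ∃ u ∈ I, ∀ y ∈ F, u * y = y := by
  classical
  induction F using Finset.induction_on with
  | empty => exact ⟨0, I.zero_mem, by simp⟩
  | insert y F _ ih =>
    obtain ⟨u, hu, huF⟩ := ih fun z hz => hF z (Finset.mem_insert_of_mem hz)
    have hy : y ∈ J := hF y (Finset.mem_insert_self y F)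
    -- a left unit `v` of the defect `y - u y` upgrades `u` to the left unit `u + v - v u`
    obtain ⟨v, hv, hvy⟩ := hJ (y - u * y) (J.sub_mem hy (hIJ u hu y hy))
    refine ⟨u + v - v * u, I.sub_mem (I.add_mem hu hv) (hI v hv u hu), ?_⟩
    intro z hz
    rcases Finset.mem_insert.mp hz with rfl | hz
    · rw [mul_sub] at hvy
      rw [sub_mul, add_mul, mul_assoc, add_sub_assoc, hvy]
      abel
    · rw [sub_mul, add_mul, mul_assoc, huF z hz]
      abel

theorem DirectSum.Decomposition.eq_zero_of_sum_eq_zero {ι N : Type*} [DecidableEq ι]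
    [AddCommGroup N] (𝒩 : ι → AddSubgroup N) [DirectSum.Decomposition 𝒩] (Γ : Finset ι)
    (y : ι → N) (hy : ∀ i ∈ Γ, y i ∈ 𝒩 i) (h : ∑ i ∈ Γ, y i = 0) : ∀ i ∈ Γ, y i = 0 :=
  (iSupIndep_iff_finsetSum_eq_zero_imp_eq_zero (AddSubgroup.toIntSubmodule ∘ 𝒩)).1
    ((iSupIndep_map_orderIso_iff _).2 (Decomposition.isInternal 𝒩).addSubgroup_iSupIndep) Γ y hy h

section

variable {G : Type} [AddGroup G] {A : Type} [Ring A] {𝒜 : G → AddSubgroup A}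
variable {M : Type} [AddCommGroup M] [Module A M] (ℳ : G → AddSubgroup M)
variable [SetLike.GradedSMul 𝒜 ℳ]

theorem mul_mem_of_mem_mul_neg [SetLike.GradedMul 𝒜] {g : G} {x y : A}
    (hx : x ∈ 𝒜 g * 𝒜 (-g)) (hy : y ∈ 𝒜 g) : x * y ∈ 𝒜 g := by
  refine AddSubmonoid.mul_induction_on hx (fun a ha b hb => ?_) fun x x' hx hx' => ?_
  · rw [mul_assoc]
    simpa using SetLike.mul_mem_graded (A := 𝒜) ha (SetLike.mul_mem_graded hb hy)
  · rw [add_mul]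
    exact add_mem hx hx'

theorem mul_mem_mul_neg [SetLike.GradedMul 𝒜] {g : G} {x y : A} (hx : x ∈ 𝒜 g * 𝒜 (-g))
    (hy : y ∈ 𝒜 g * 𝒜 (-g)) : x * y ∈ 𝒜 g * 𝒜 (-g) := by
  refine AddSubmonoid.mul_induction_on hy (fun a ha b hb => ?_) fun y y' hy hy' => ?_
  · rw [← mul_assoc]
    exact AddSubmonoid.mul_mem_mul (mul_mem_of_mem_mul_neg hx ha) hb
  · rw [mul_add]
    exact add_mem hy hy'

theorem IsNearlyEpsilonStrong.exists_left_unit [SetLike.GradedMul 𝒜]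
    (hS : IsNearlyEpsilonStrong 𝒜) {g : G} (F : Finset A) (hF : ∀ s ∈ F, s ∈ 𝒜 g) :
    ∃ u ∈ 𝒜 g * 𝒜 (-g), ∀ s ∈ F, u * s = s :=
  exists_left_unit_of_finset (fun _ hx _ hy => mul_mem_mul_neg hx hy)
    (fun _ hx _ hy => mul_mem_of_mem_mul_neg hx hy)
    (fun s hs => (hS g s hs).imp fun _ ⟨hu, _, _, hus, _⟩ => ⟨hu, hus⟩) F hF

theorem IsNearlyEpsilonStrong.smul_mem_prodSMul (hS : IsNearlyEpsilonStrong 𝒜) {g : G} {s : A}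
    (hs : s ∈ 𝒜 g) {m : M} (hm : m ∈ ℳ 0) : s • m ∈ prodSMul (𝒜 g * 𝒜 (-g)) (ℳ g) := by
  obtain ⟨u, hu, -, -, hus, -⟩ := hS g s hs
  rw [← hus, mul_smul]
  exact AddSubmonoid.smul_mem_smul hu (by simpa using SetLike.GradedSMul.smul_mem hs hm)

variable (A) in
noncomputable def tensorSMul (N : AddSubgroup M) : A ⊗[ℤ] N →ₗ[ℤ] M :=
  TensorProduct.lift
    ((Algebra.lsmul ℤ ℤ M : A →ₐ[ℤ] Module.End ℤ M).toLinearMap.compl₂ N.subtype.toIntLinearMap)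

@[simp]
theorem tensorSMul_tmul (N : AddSubgroup M) (s : A) (n : N) :
    tensorSMul A N (s ⊗ₜ[ℤ] n) = s • (n : M) :=
  rfl

theorem balancedRelFull_le_ker : balancedRelFull 𝒜 ℳ ≤ LinearMap.ker (tensorSMul A (ℳ 0)) := by
  rw [balancedRelFull, Submodule.span_le]
  rintro _ ⟨s, r, m, rfl⟩
  simp [mul_smul]

variable (𝒜) in
noncomputable def tensorFullSMul : tensorFull 𝒜 ℳ →ₗ[ℤ] M :=
  (balancedRelFull 𝒜 ℳ).liftQ (tensorSMul A (ℳ 0)) (balancedRelFull_le_ker ℳ)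

theorem IsNearlyEpsilonStrong.range_tensorFullSMul [DecidableEq G] [GradedRing 𝒜]
    (hS : IsNearlyEpsilonStrong 𝒜) :
    (LinearMap.range (tensorFullSMul 𝒜 ℳ)).toAddSubgroup =
      ⨆ g, prodSMul (𝒜 g * 𝒜 (-g)) (ℳ g) := by
  classical
  rw [show LinearMap.range (tensorFullSMul 𝒜 ℳ) = LinearMap.range (tensorSMul A (ℳ 0)) from
    Submodule.range_liftQ _ _ _]
  refine le_antisymm ?_ (iSup_le fun g => ?_)
  · rintro _ ⟨t, rfl⟩
    induction t using TensorProduct.induction_on with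
    | zero => exact zero_mem _
    | tmul s m =>
      rw [tensorSMul_tmul, ← DirectSum.sum_support_decompose 𝒜 s, Finset.sum_smul]
      exact sum_mem fun g _ => AddSubgroup.mem_iSup_of_mem g <|
        hS.smul_mem_prodSMul ℳ (SetLike.coe_mem _) m.2
    | add t t' ht ht' =>
      rw [map_add]
      exact add_mem ht ht'
  · intro x hx
    refine AddSubmonoid.smul_induction_on hx (fun u hu n hn => ?_) fun _ _ => add_mem
    refine AddSubmonoid.mul_induction_on hu (fun a _ b hb => ?_) fun u u' hu hu' => ?_
    · have hbn : b • n ∈ ℳ 0 := by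
        simpa using SetLike.GradedSMul.smul_mem (A := 𝒜) (B := ℳ) hb hn
      exact ⟨a ⊗ₜ ⟨b • n, hbn⟩, by simp [mul_smul]⟩
    · rw [add_smul]
      exact add_mem hu hu'

theorem IsNearlyEpsilonStrong.sum_tmul_mem_balancedRelFull [SetLike.GradedMul 𝒜]
    (hS : IsNearlyEpsilonStrong 𝒜) {g : G} {ι : Type*} (F : Finset ι) (s : ι → 𝒜 g)
    (m : ι → ℳ 0) (h : ∑ i ∈ F, (s i : A) • (m i : M) = 0) :
    ∑ i ∈ F, (s i : A) ⊗ₜ[ℤ] m i ∈ balancedRelFull 𝒜 ℳ := by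
  classical
  obtain ⟨u, hu, hus⟩ := hS.exists_left_unit (g := g) (F.image fun i => (s i : A)) (by simp)
  suffices ∀ w ∈ 𝒜 g * 𝒜 (-g), ∑ i ∈ F, (w * s i) ⊗ₜ[ℤ] m i ∈ balancedRelFull 𝒜 ℳ by
    convert this u hu using 1
    exact Finset.sum_congr rfl fun i hi => by rw [hus _ (Finset.mem_image_of_mem _ hi)]
  intro w hw
  refine AddSubmonoid.mul_induction_on hw (fun a _ b hb => ?_) fun w w' hw hw' => ?_
  · have hbs : ∀ i, b * s i ∈ 𝒜 0 := fun i => by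
      simpa using SetLike.mul_mem_graded (A := 𝒜) hb (s i).2
    let n : ι → ℳ 0 := fun i => ⟨(b * s i) • (m i : M), by
      simpa using SetLike.GradedSMul.smul_mem (A := 𝒜) (B := ℳ) (hbs i) (m i).2⟩
    have hn : ∑ i ∈ F, n i = 0 := Subtype.ext (by simp [n, mul_smul, ← Finset.smul_sum, h])
    have hbal : ∀ i ∈ F, (a * (b * s i)) ⊗ₜ[ℤ] m i - a ⊗ₜ[ℤ] n i ∈ balancedRelFull 𝒜 ℳ :=
      fun i _ => Submodule.subset_span ⟨a, ⟨b * s i, hbs i⟩, m i, rfl⟩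
    simpa [Finset.sum_sub_distrib, ← TensorProduct.tmul_sum, hn, mul_assoc] using sum_mem hbal
  · simpa only [add_mul, TensorProduct.add_tmul, Finset.sum_add_distrib] using add_mem hw hw'

theorem IsNearlyEpsilonStrong.ker_tensorSMul [DecidableEq G] [GradedRing 𝒜]
    [DirectSum.Decomposition ℳ] (hS : IsNearlyEpsilonStrong 𝒜) :
    LinearMap.ker (tensorSMul A (ℳ 0)) = balancedRelFull 𝒜 ℳ := by
  classical
  refine le_antisymm (fun t ht => ?_) (balancedRelFull_le_ker ℳ)
  obtain ⟨F, rfl⟩ := TensorProduct.exists_finset t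
  let Γ := F.biUnion fun p => (DirectSum.decompose 𝒜 p.1).support
  have hsplit : ∀ p ∈ F, ∑ g ∈ Γ, (DirectSum.decompose 𝒜 p.1 g : A) = p.1 := fun p hp => by
    rw [← Finset.sum_subset (Finset.subset_biUnion_of_mem _ hp) fun g _ hg => by
      simp [DFinsupp.notMem_support_iff.mp hg]]
    exact DirectSum.sum_support_decompose 𝒜 p.1
  have hsum : ∑ p ∈ F, p.1 ⊗ₜ[ℤ] p.2 =
      ∑ g ∈ Γ, ∑ p ∈ F, (DirectSum.decompose 𝒜 p.1 g : A) ⊗ₜ[ℤ] p.2 := by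
    rw [Finset.sum_comm]
    exact Finset.sum_congr rfl fun p hp => by rw [← TensorProduct.sum_tmul, hsplit p hp]
  have hdeg : ∀ g ∈ Γ, ∑ p ∈ F, (DirectSum.decompose 𝒜 p.1 g : A) • (p.2 : M) = 0 := by
    refine DirectSum.Decomposition.eq_zero_of_sum_eq_zero ℳ Γ _
      (fun g _ => sum_mem fun p _ => ?_) (by simpa [hsum] using ht)
    simpa using SetLike.GradedSMul.smul_mem (A := 𝒜) (B := ℳ) (SetLike.coe_mem _) p.2.2
  rw [hsum]
  exact sum_mem fun g hg =>
    hS.sum_tmul_mem_balancedRelFull ℳ F (fun p => DirectSum.decompose 𝒜 p.1 g) Prod.snd (hdeg g hg)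

theorem IsNearlyEpsilonStrong.injective_tensorFullSMul [DecidableEq G] [GradedRing 𝒜]
    [DirectSum.Decomposition ℳ] (hS : IsNearlyEpsilonStrong 𝒜) :
    Function.Injective (tensorFullSMul 𝒜 ℳ) :=
  LinearMap.ker_eq_bot.1 <| Submodule.ker_liftQ_eq_bot' _ _ (hS.ker_tensorSMul ℳ).symm

end

theorem tau_isomorphism_of_nearlyEpsilonStrong
    (hS : IsNearlyEpsilonStrong 𝒜) :
    ∃ e : tensorFull 𝒜 ℳ ≃ₗ[ℤ] ↥(⨆ g : G, prodSMul (𝒜 g * 𝒜 (-g)) (ℳ g)),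
      (∀ (s : A) (m : ↥(ℳ 0)),
        ((e (Submodule.Quotient.mk (s ⊗ₜ[ℤ] m)) :
            ↥(⨆ g : G, prodSMul (𝒜 g * 𝒜 (-g)) (ℳ g))) : M) = s • m.1) ∧
      ∀ (g : G) (s : A), s ∈ 𝒜 g → ∀ m : ↥(ℳ 0),
        ((e (Submodule.Quotient.mk (s ⊗ₜ[ℤ] m)) :
            ↥(⨆ g : G, prodSMul (𝒜 g * 𝒜 (-g)) (ℳ g))) : M)
          ∈ prodSMul (𝒜 g * 𝒜 (-g)) (ℳ g) :=
  ⟨(LinearEquiv.ofInjective _ (hS.injective_tensorFullSMul ℳ)).trans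
      (LinearEquiv.ofEq _ _ (congrArg AddSubgroup.toIntSubmodule (hS.range_tensorFullSMul ℳ))),
    fun _ _ => rfl, fun _ _ hs m => hS.smul_mem_prodSMul ℳ hs m.2⟩

end Stmt19
end Defs
end
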